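/- The generating function of the bi-periodic Jacobsthal matrix sequence satisfies (1 − (ab+4)x² + 4x⁴)·∑_{m≥0} J_m x^m = J_0 + J_1 x + (a·J_1 − (ab+2)·J_0)·x² + (2b·J_0 − 2·J_1)·x³ as an identity of formal power series with 2×2 real matrix coefficients. -/

import Mathlib

/-!
Every second application of the recurrence uses `a` and the other `b`, so two steps combine
into the constant-coefficient recurrence `J (n + 4) = (a b + 4) J (n + 2) - 4 J n`. Multiplying
the generating function by `1 - (a b + 4) x² + 4 x⁴` therefore kills every coefficient from `x⁴`
on, and the four surviving ones are read off from `J 2` and `J 3`.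
-/

noncomputable def JM (a b : ℝ) : ℕ → Matrix (Fin 2) (Fin 2) ℝ
  | 0 => 1
  | 1 => !![b, 2 * b / a; 1, 0]
  | n + 2 => (if Even (n + 2) then a else b) • JM a b (n + 1) + (2 : ℝ) • JM a b n

namespace PowerSeries

variable {R : Type*} [Ring R]

theorem mul_mk_of_add_four (p q : R) (f : ℕ → R)
    (hf : ∀ n, f (n + 4) = p * f (n + 2) - q * f n) :
    (1 - C p * X ^ 2 + C q * X ^ 4) * mk f
      = C (f 0) + C (f 1) * X + C (f 2 - p * f 0) * X ^ 2 + C (f 3 - p * f 1) * X ^ 3 := by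
  ext n
  rw [add_mul, sub_mul, one_mul, mul_assoc, mul_assoc]
  simp only [map_add, map_sub, coeff_C_mul, coeff_X_pow_mul', coeff_mk, coeff_mul_X_pow',
    coeff_C, coeff_X]
  rcases n with _ | _ | _ | _ | n <;> simp [hf]

end PowerSeries

section

variable (a b : ℝ)

theorem JM_add_two (n : ℕ) :
    JM a b (n + 2) = (if Even n then a else b) • JM a b (n + 1) + (2 : ℝ) • JM a b n := by
  simp [JM, Nat.even_add_one]

theorem JM_add_four (n : ℕ) :
    JM a b (n + 4) = (a * b + 4) • JM a b (n + 2) - (4 : ℝ) • JM a b n := by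
  rw [JM_add_two, JM_add_two a b (n + 1), JM_add_two a b n]
  by_cases hn : Even n <;> simp only [hn, Nat.even_add_one, if_true, if_false, not_true,
    not_false_eq_true] <;> module

end

open PowerSeries in
theorem stmt5_general (a b : ℝ) :
    (1 - C ((a * b + 4) • (1 : Matrix (Fin 2) (Fin 2) ℝ)) * X ^ 2
        + C ((4 : ℝ) • (1 : Matrix (Fin 2) (Fin 2) ℝ)) * X ^ 4)
        * PowerSeries.mk (JM a b)
      = C (JM a b 0)
        + C (JM a b 1) * X
        + C (a • JM a b 1 - (a * b + 2) • JM a b 0) * X ^ 2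
        + C ((2 * b) • JM a b 0 - (2 : ℝ) • JM a b 1) * X ^ 3 := by
  rw [mul_mk_of_add_four _ _ _ fun n => by simp only [smul_one_mul, JM_add_four]]
  have h2 : JM a b 2 - ((a * b + 4) • 1) * JM a b 0 = a • JM a b 1 - (a * b + 2) • JM a b 0 := by
    simp only [smul_one_mul, JM_add_two, Even.zero, if_true]
    module
  have h3 : JM a b 3 - ((a * b + 4) • 1) * JM a b 1 = (2 * b) • JM a b 0 - (2 : ℝ) • JM a b 1 := by
    simp only [smul_one_mul, JM_add_two, Even.zero, Nat.not_even_one, if_true, if_false]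
    module
  rw [h2, h3]

open PowerSeries in
theorem stmt5 (a b : ℝ) (ha : a ≠ 0) (hb : b ≠ 0) :
    (1 - C ((a * b + 4) • (1 : Matrix (Fin 2) (Fin 2) ℝ)) * X ^ 2
        + C ((4 : ℝ) • (1 : Matrix (Fin 2) (Fin 2) ℝ)) * X ^ 4)
        * PowerSeries.mk (JM a b)
      = C (JM a b 0)
        + C (JM a b 1) * X
        + C (a • JM a b 1 - (a * b + 2) • JM a b 0) * X ^ 2
        + C ((2 * b) • JM a b 0 - (2 : ℝ) • JM a b 1) * X ^ 3 :=
  stmt5_general a b
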